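/- Let V ⊆ ℝ^d be a Borel-measurable cone (closed under multiplication by positive scalars) and let w ∈ ℝ^d. Then γ(V + w) ≥ γ(V) · exp(−½‖w‖² − ‖w‖·√d) and γ(V + w) ≤ γ(V) · exp(‖w‖·√d). -/

import Mathlib

/-!
A cone is invariant under `x ↦ √a • x`, so the Gaussian of covariance `a⁻¹ I` gives `V` the
mass `a ^ (-d/2) γ(V)`. On the other hand `γ(V + w) = ∫_V φ(x + w) dx` for the standard Gaussian
density `φ`, and by Cauchy–Schwarz and AM–GM, `|‖x + w‖² - ‖x‖² - ‖w‖²| ≤ ‖w‖ (‖x‖² / u + u)`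
for every `u > 0`. With `u = ‖w‖ + √d`, resp. `u = √d`, this squeezes `φ(x + w)` between
multiples of the Gaussian densities of covariance `(1 + ‖w‖/√d) I` and `(1 + ‖w‖/√d)⁻¹ I`, and
the resulting scale factors `(1 + ‖w‖/√d) ^ (d/2)` are at most `exp (‖w‖ √d / 2)`.
-/

open MeasureTheory Set

noncomputable section

def gauss {d : ℕ} (B : Set (EuclideanSpace ℝ (Fin d))) : ℝ :=
  ∫ x in B, (2 * Real.pi) ^ (-(d : ℝ) / 2) * Real.exp (-‖x‖ ^ 2 / 2)

open Real Module Pointwise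

theorem smul_set_eq_self_of_cone {M : Type*} [MulAction ℝ M] {V : Set M}
    (hV : ∀ c : ℝ, 0 < c → ∀ x ∈ V, c • x ∈ V) {c : ℝ} (hc : 0 < c) : c • V = V := by
  refine (smul_set_subset_iff.2 fun x hx ↦ hV c hc x hx).antisymm fun x hx ↦ ?_
  refine ⟨c⁻¹ • x, hV c⁻¹ (inv_pos.2 hc) x hx, ?_⟩
  simp [smul_smul, mul_inv_cancel₀ hc.ne']

theorem setIntegral_comp_smul_of_cone {E F : Type*} [NormedAddCommGroup E] [NormedSpace ℝ E]
    [MeasurableSpace E] [BorelSpace E] [FiniteDimensional ℝ E]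
    [NormedAddCommGroup F] [NormedSpace ℝ F]
    (μ : Measure E) [μ.IsAddHaarMeasure] {V : Set E}
    (hV : ∀ c : ℝ, 0 < c → ∀ x ∈ V, c • x ∈ V) (f : E → F) {R : ℝ} (hR : 0 < R) :
    ∫ x in V, f (R • x) ∂μ = (R ^ finrank ℝ E)⁻¹ • ∫ x in V, f x ∂μ := by
  rw [μ.setIntegral_comp_smul_of_pos f V hR, smul_set_eq_self_of_cone hV hR]

theorem integrable_exp_neg_mul_sq_norm_div_two {E : Type*} [NormedAddCommGroup E]
    [InnerProductSpace ℝ E] [FiniteDimensional ℝ E] [MeasurableSpace E] [BorelSpace E]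
    {b : ℝ} (hb : 0 < b) : Integrable fun x : E ↦ exp (-(b * ‖x‖ ^ 2) / 2) := by
  have hform : (fun x : E ↦ exp (-(b * ‖x‖ ^ 2) / 2)) = fun x ↦ exp (-(b / 2) * ‖x‖ ^ 2) := by
    ext x; ring_nf
  rw [hform]
  refine Integrable.of_integral_ne_zero ?_
  rw [GaussianFourier.integral_rexp_neg_mul_sq_norm (half_pos hb)]
  positivity

theorem integrable_const_mul_exp_neg_sq_norm_add_div_two {E : Type*} [NormedAddCommGroup E]
    [InnerProductSpace ℝ E] [FiniteDimensional ℝ E] [MeasurableSpace E] [BorelSpace E]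
    (c : ℝ) (w : E) : Integrable fun x : E ↦ c * exp (-‖x + w‖ ^ 2 / 2) := by
  simpa only [one_mul] using
    ((integrable_exp_neg_mul_sq_norm_div_two one_pos).comp_add_right w).const_mul c

theorem abs_norm_add_sq_sub_le {E : Type*} [NormedAddCommGroup E] [InnerProductSpace ℝ E]
    (x w : E) {u : ℝ} (hu : 0 < u) :
    |‖x + w‖ ^ 2 - (‖x‖ ^ 2 + ‖w‖ ^ 2)| ≤ ‖w‖ * (‖x‖ ^ 2 / u + u) := by
  have amgm : 2 * ‖x‖ ≤ ‖x‖ ^ 2 / u + u := by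
    rw [div_add' _ _ _ hu.ne', le_div_iff₀ hu]
    nlinarith [sq_nonneg (‖x‖ - u)]
  have hexpand : ‖x + w‖ ^ 2 - (‖x‖ ^ 2 + ‖w‖ ^ 2) = 2 * inner ℝ x w := by
    rw [norm_add_sq_real]; ring
  calc |‖x + w‖ ^ 2 - (‖x‖ ^ 2 + ‖w‖ ^ 2)| = 2 * |inner ℝ x w| := by
        rw [hexpand, abs_mul, abs_two]
    _ ≤ 2 * (‖x‖ * ‖w‖) := by gcongr; exact abs_real_inner_le_norm x w
    _ ≤ ‖w‖ * (‖x‖ ^ 2 / u + u) := by nlinarith [norm_nonneg w]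

theorem sqrt_one_add_div_sqrt_pow_le_exp (t : ℝ) (d : ℕ) :
    √(1 + t / √d) ^ d ≤ exp (t * √d / 2) := by
  calc √(1 + t / √d) ^ d ≤ √(exp (t / √d)) ^ d := by
        gcongr; linarith [add_one_le_exp (t / √d)]
    _ = exp (t * √d / 2) := by
        rw [← exp_half, ← exp_nat_mul]
        congr 1
        rcases eq_or_ne (√d) 0 with h | h
        · simp [h]
        · have hd := mul_self_sqrt (Nat.cast_nonneg (α := ℝ) d)
          field_simp
          linear_combination (-t) * hd

theorem gauss_nonneg {d : ℕ} (B : Set (EuclideanSpace ℝ (Fin d))) : 0 ≤ gauss B :=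
  integral_nonneg fun _ ↦ by positivity

theorem gauss_image_add_right {d : ℕ} (V : Set (EuclideanSpace ℝ (Fin d)))
    (w : EuclideanSpace ℝ (Fin d)) :
    gauss ((· + w) '' V) =
      ∫ x in V, (2 * π) ^ (-(d : ℝ) / 2) * exp (-‖x + w‖ ^ 2 / 2) :=
  (measurePreserving_add_right volume w).setIntegral_image_emb
    (measurableEmbedding_addRight w) _ V

theorem setIntegral_gaussian_rescale_of_cone {d : ℕ} {V : Set (EuclideanSpace ℝ (Fin d))}
    (hV : ∀ c : ℝ, 0 < c → ∀ x ∈ V, c • x ∈ V) {a : ℝ} (ha : 0 < a) :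
    ∫ x in V, (2 * π) ^ (-(d : ℝ) / 2) * exp (-(a * ‖x‖ ^ 2) / 2) = (√a ^ d)⁻¹ * gauss V := by
  have h := setIntegral_comp_smul_of_cone volume hV
    (fun x ↦ (2 * π) ^ (-(d : ℝ) / 2) * exp (-‖x‖ ^ 2 / 2)) (sqrt_pos.2 ha)
  simp only [norm_smul, mul_pow, norm_of_nonneg (sqrt_nonneg a), sq_sqrt ha.le,
    finrank_euclideanSpace_fin, smul_eq_mul] at h
  exact h

theorem gauss_image_add_right_le_of_cone {d : ℕ} {V : Set (EuclideanSpace ℝ (Fin d))}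
    (hV : ∀ c : ℝ, 0 < c → ∀ x ∈ V, c • x ∈ V) (w : EuclideanSpace ℝ (Fin d)) (hd : 0 < d) :
    gauss ((· + w) '' V) ≤ gauss V * exp (‖w‖ * √d) := by
  set c : ℝ := (2 * π) ^ (-(d : ℝ) / 2)
  have hs : 0 < √(d : ℝ) := sqrt_pos.2 (Nat.cast_pos.2 hd)
  have hts : 0 < ‖w‖ + √d := by positivity
  set a := (1 + ‖w‖ / √d)⁻¹
  have ha : 0 < a := by positivity
  have hpoint : ∀ x : EuclideanSpace ℝ (Fin d),
      c * exp (-‖x + w‖ ^ 2 / 2) ≤ exp (‖w‖ * √d / 2) * (c * exp (-(a * ‖x‖ ^ 2) / 2)) := by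
    intro x
    have hsq := (abs_le.1 (abs_norm_add_sq_sub_le x w hts)).1
    have ha' : a = 1 - ‖w‖ / (‖w‖ + √d) := by simp only [a]; field_simp; ring
    rw [mul_left_comm, ← exp_add]
    gcongr
    rw [ha']
    linear_combination (1 / 2 : ℝ) * hsq
  have hscaled_int : Integrable fun x : EuclideanSpace ℝ (Fin d) ↦
      exp (‖w‖ * √d / 2) * (c * exp (-(a * ‖x‖ ^ 2) / 2)) :=
    ((integrable_exp_neg_mul_sq_norm_div_two ha).const_mul c).const_mul _
  have hgV := gauss_nonneg V
  calc gauss ((· + w) '' V) = ∫ x in V, c * exp (-‖x + w‖ ^ 2 / 2) := gauss_image_add_right V w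
    _ ≤ ∫ x in V, exp (‖w‖ * √d / 2) * (c * exp (-(a * ‖x‖ ^ 2) / 2)) :=
        setIntegral_mono (integrable_const_mul_exp_neg_sq_norm_add_div_two c w).integrableOn
          hscaled_int.integrableOn hpoint
    _ = exp (‖w‖ * √d / 2) * (√(1 + ‖w‖ / √d) ^ d * gauss V) := by
        rw [integral_const_mul, setIntegral_gaussian_rescale_of_cone hV ha, sqrt_inv, inv_pow,
          inv_inv]
    _ ≤ exp (‖w‖ * √d / 2) * (exp (‖w‖ * √d / 2) * gauss V) := by
        gcongr; exact sqrt_one_add_div_sqrt_pow_le_exp ‖w‖ d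
    _ = gauss V * exp (‖w‖ * √d) := by rw [← mul_assoc, ← exp_add]; ring_nf

theorem le_gauss_image_add_right_of_cone {d : ℕ} {V : Set (EuclideanSpace ℝ (Fin d))}
    (hV : ∀ c : ℝ, 0 < c → ∀ x ∈ V, c • x ∈ V) (w : EuclideanSpace ℝ (Fin d)) (hd : 0 < d) :
    gauss V * exp (-‖w‖ ^ 2 / 2 - ‖w‖ * √d) ≤ gauss ((· + w) '' V) := by
  set c : ℝ := (2 * π) ^ (-(d : ℝ) / 2)
  have hs : 0 < √(d : ℝ) := sqrt_pos.2 (Nat.cast_pos.2 hd)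
  set a := 1 + ‖w‖ / √d
  have ha : 0 < a := by positivity
  set C := exp (-‖w‖ ^ 2 / 2 - ‖w‖ * √d / 2)
  have hpoint : ∀ x : EuclideanSpace ℝ (Fin d),
      C * (c * exp (-(a * ‖x‖ ^ 2) / 2)) ≤ c * exp (-‖x + w‖ ^ 2 / 2) := by
    intro x
    have hsq := (abs_le.1 (abs_norm_add_sq_sub_le x w hs)).2
    rw [mul_left_comm, ← exp_add]
    gcongr
    simp only [a]
    linear_combination (1 / 2 : ℝ) * hsq
  have hscaled_int : Integrable fun x : EuclideanSpace ℝ (Fin d) ↦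
      C * (c * exp (-(a * ‖x‖ ^ 2) / 2)) :=
    ((integrable_exp_neg_mul_sq_norm_div_two ha).const_mul c).const_mul _
  have hgV := gauss_nonneg V
  calc gauss V * exp (-‖w‖ ^ 2 / 2 - ‖w‖ * √d)
      = C * ((exp (‖w‖ * √d / 2))⁻¹ * gauss V) := by
        rw [← exp_neg, ← mul_assoc, ← exp_add]; ring_nf
    _ ≤ C * ((√a ^ d)⁻¹ * gauss V) := by
        gcongr; exact sqrt_one_add_div_sqrt_pow_le_exp ‖w‖ d
    _ = ∫ x in V, C * (c * exp (-(a * ‖x‖ ^ 2) / 2)) := by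
        rw [integral_const_mul, setIntegral_gaussian_rescale_of_cone hV ha]
    _ ≤ ∫ x in V, c * exp (-‖x + w‖ ^ 2 / 2) :=
        setIntegral_mono hscaled_int.integrableOn
          (integrable_const_mul_exp_neg_sq_norm_add_div_two c w).integrableOn hpoint
    _ = gauss ((· + w) '' V) := (gauss_image_add_right V w).symm

theorem stmt5_general {d : ℕ} (V : Set (EuclideanSpace ℝ (Fin d)))
    (hVcone : ∀ c : ℝ, 0 < c → ∀ x ∈ V, c • x ∈ V)
    (w : EuclideanSpace ℝ (Fin d)) :
    gauss V * Real.exp (-‖w‖ ^ 2 / 2 - ‖w‖ * Real.sqrt d) ≤ gauss ((· + w) '' V) ∧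
    gauss ((· + w) '' V) ≤ gauss V * Real.exp (‖w‖ * Real.sqrt d) := by
  rcases Nat.eq_zero_or_pos d with rfl | hd
  · obtain rfl : w = 0 := Subsingleton.elim w 0
    simp
  exact ⟨le_gauss_image_add_right_of_cone hVcone w hd,
    gauss_image_add_right_le_of_cone hVcone w hd⟩

/-- Simpler two-sided bounds for the Gaussian measure of a shifted cone. -/
theorem stmt5 {d : ℕ} (V : Set (EuclideanSpace ℝ (Fin d))) (hVmeas : MeasurableSet V)
    (hVcone : ∀ c : ℝ, 0 < c → ∀ x ∈ V, c • x ∈ V)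
    (w : EuclideanSpace ℝ (Fin d)) :
    gauss V * Real.exp (-‖w‖ ^ 2 / 2 - ‖w‖ * Real.sqrt d) ≤ gauss ((· + w) '' V) ∧
    gauss ((· + w) '' V) ≤ gauss V * Real.exp (‖w‖ * Real.sqrt d) :=
  stmt5_general V hVcone w
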